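/- Let K ⊆ ℂ be a subfield, let G be a countable group with lcm(G) finite, and let (H_i)_{i∈I} be a directed family of subgroups of G (directed under inclusion) whose union is G, such that every H_i satisfies the strong Atiyah conjecture over K. Then G satisfies the strong Atiyah conjecture over K: rk_G(M) ∈ (1/lcm(G))·ℤ for every matrix M over K[G]. -/

import Mathlib

noncomputable section

open scoped ENNReal

local notation "⟪" x ", " y "⟫" => @inner ℂ _ _ x y

abbrev L2 (G : Type) : Type := lp (fun _ : G => ℂ) 2

def delta {G : Type} (g : G) : L2 G :=
  letI := Classical.decEq G
  lp.single 2 g 1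

theorem memℓp_comp_equiv {G : Type} (e : G ≃ G) (x : L2 G) :
    Memℓp (fun g => x (e g)) 2 := by
  have h2 : (0:ℝ) < (2:ℝ≥0∞).toReal := by norm_num
  rw [memℓp_gen_iff h2]
  exact (e.summable_iff (f := fun i => ‖x i‖ ^ (2:ℝ≥0∞).toReal)).2
    ((memℓp_gen_iff h2).1 (lp.memℓp x))

def lpShift {G : Type} (e : G ≃ G) : L2 G ≃ₗᵢ[ℂ] L2 G where
  toFun x := ⟨fun g => x (e g), memℓp_comp_equiv e x⟩
  invFun x := ⟨fun g => x (e.symm g), memℓp_comp_equiv e.symm x⟩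
  left_inv x := by apply Subtype.ext; funext g; simp
  right_inv x := by apply Subtype.ext; funext g; simp
  map_add' x y := by apply Subtype.ext; funext g; simp only [lp.coeFn_add]; rfl
  map_smul' c x := by apply Subtype.ext; funext g; simp [lp.coeFn_smul, Pi.smul_apply]
  norm_map' x := by
    have h2 : (0:ℝ) < (2:ℝ≥0∞).toReal := by norm_num
    rw [lp.norm_eq_tsum_rpow h2, lp.norm_eq_tsum_rpow h2]
    congr 1
    exact e.tsum_eq (f := fun g => ‖x g‖ ^ (2:ℝ≥0∞).toReal)

def Rop {G : Type} [Group G] (h : G) : L2 G →L[ℂ] L2 G :=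
  (lpShift (Equiv.mulRight h⁻¹)).toLinearIsometry.toContinuousLinearMap

/-- The bounded operator on ℓ²(G) given by right multiplication by an element of the
group algebra K[G], where K is a subfield of ℂ. -/
def rightMulAlg {G : Type} [Group G] {K : Subfield ℂ} (p : MonoidAlgebra K G) :
    L2 G →L[ℂ] L2 G :=
  p.coeff.sum fun g c => (c : ℂ) • Rop g

/-- The bounded operator ℓ²(G)ⁿ → ℓ²(G)ᵐ given by right multiplication by a matrix
over the group algebra K[G]. -/
def rightMulMat {G : Type} [Group G] {K : Subfield ℂ} {n m : ℕ}
    (M : Matrix (Fin n) (Fin m) (MonoidAlgebra K G)) :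
    PiLp 2 (fun _ : Fin n => L2 G) →L[ℂ] PiLp 2 (fun _ : Fin m => L2 G) :=
  ((PiLp.continuousLinearEquiv 2 ℂ (fun _ : Fin m => L2 G)).symm :
      (∀ _ : Fin m, L2 G) →L[ℂ] PiLp 2 (fun _ : Fin m => L2 G)) ∘L
    (ContinuousLinearMap.pi fun j : Fin m =>
      ∑ i : Fin n, (rightMulAlg (M i j)) ∘L (PiLp.proj 2 (fun _ : Fin n => L2 G) i))

/-- The vector (0, …, δ_e, …, 0) in ℓ²(G)ᵐ with δ_e in the j-th coordinate. -/
def deltaVec {G : Type} [Group G] {m : ℕ} (j : Fin m) : PiLp 2 (fun _ : Fin m => L2 G) :=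
  (PiLp.continuousLinearEquiv 2 ℂ (fun _ : Fin m => L2 G)).symm
    (Pi.single j (delta (1 : G)))

instance PiLpL2.completeSpace {G : Type} {m : ℕ} :
    CompleteSpace (PiLp 2 (fun _ : Fin m => L2 G)) :=
  inferInstance

/-- The von Neumann rank rk_G(M) of a matrix M over K[G]: the sum of the diagonal
entries ⟨P δ_e^{(j)}, δ_e^{(j)}⟩ where P is the orthogonal projection onto the closure
of the range of the right multiplication operator r_M. -/
def vnRank {G : Type} [Group G] {K : Subfield ℂ} {n m : ℕ}
    (M : Matrix (Fin n) (Fin m) (MonoidAlgebra K G)) : ℂ :=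
  haveI : CompleteSpace
      ↥(LinearMap.range (rightMulMat M :
          PiLp 2 (fun _ : Fin n => L2 G) →ₗ[ℂ] PiLp 2 (fun _ : Fin m => L2 G))).topologicalClosure :=
    (Submodule.isClosed_topologicalClosure _).completeSpace_coe
  ∑ j : Fin m,
    ⟪deltaVec j,
      ((Submodule.orthogonalProjectionOnto
        (LinearMap.range (rightMulMat M :
          PiLp 2 (fun _ : Fin n => L2 G) →ₗ[ℂ] PiLp 2 (fun _ : Fin m => L2 G))).topologicalClosure
        (deltaVec j) : PiLp 2 (fun _ : Fin m => L2 G)))⟫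

/-- The set of orders of finite subgroups of G. -/
def finiteSubgroupOrders (G : Type) [Group G] : Set ℕ :=
  {k | ∃ H : Subgroup G, (H : Set G).Finite ∧ k = Nat.card H}

/-- lcm(G): the least common multiple of the orders of the finite subgroups of G
(defined to be 0 if there are infinitely many such orders). -/
def lcmOrders (G : Type) [Group G] : ℕ :=
  letI := Classical.dec ((finiteSubgroupOrders G).Finite)
  if h : (finiteSubgroupOrders G).Finite then h.toFinset.lcm id else 0

/-- G satisfies the strong Atiyah conjecture over the subfield K ⊆ ℂ:
lcm(G) is finite and every matrix over K[G] has von Neumann rank in (1/lcm(G))·ℤ. -/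
def SatisfiesStrongAtiyah (K : Subfield ℂ) (G : Type) [Group G] : Prop :=
  (finiteSubgroupOrders G).Finite ∧
    ∀ (n m : ℕ) (M : Matrix (Fin n) (Fin m) (MonoidAlgebra K G)),
      ∃ z : ℤ, vnRank M = (z : ℂ) / (lcmOrders G : ℂ)

/-!
An entry of a matrix `M` over `K[G]` has finite support, so by directedness `M` is the image of
a matrix `M'` over `K[H_k]` for a single `k`. Extension by zero `ℓ²(H_k) → ℓ²(G)` is an isometry
fixing `δ_e` which intertwines `r_{M'}` with `r_M`, and its adjoint, restriction, intertwines them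
the other way. Hence it carries the projection onto the closed range of `r_{M'}` to the one of
`r_M`, so `rk_G(M) = rk_{H_k}(M') ∈ (1/lcm(H_k))ℤ ⊆ (1/lcm(G))ℤ`, as `lcm(H_k)` divides `lcm(G)`.
-/

open Function

namespace L2

variable {α β : Type} {f : α → β}

theorem norm_rpow_extend_zero {E : Type*} [NormedAddCommGroup E] (g : α → E) {p : ℝ}
    (hp : p ≠ 0) : (fun b => ‖extend f g 0 b‖ ^ p) = extend f (fun a => ‖g a‖ ^ p) 0 := by
  funext b
  rw [apply_extend (‖·‖ ^ p)]
  simp [comp_def, Real.zero_rpow hp, Pi.zero_def]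

theorem memℓp_extend_zero (hf : Injective f) (x : L2 α) : Memℓp (extend f x 0) 2 := by
  have h2 : (0:ℝ) < (2:ℝ≥0∞).toReal := by norm_num
  rw [memℓp_gen_iff h2, norm_rpow_extend_zero _ h2.ne', summable_extend_zero hf]
  exact (memℓp_gen_iff h2).1 (lp.memℓp x)

def extendZero (hf : Injective f) : L2 α →ₗᵢ[ℂ] L2 β where
  toFun x := ⟨extend f x 0, memℓp_extend_zero hf x⟩
  map_add' x y := Subtype.ext <| map_add (ExtendByZero.linearMap ℂ f) (x : α → ℂ) y
  map_smul' c x := Subtype.ext <| map_smul (ExtendByZero.linearMap ℂ f) c (x : α → ℂ)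
  norm_map' x := by
    have h2 : (0:ℝ) < (2:ℝ≥0∞).toReal := by norm_num
    rw [lp.norm_eq_tsum_rpow h2, lp.norm_eq_tsum_rpow h2]
    change (∑' b, ‖extend f x 0 b‖ ^ _) ^ _ = _
    rw [norm_rpow_extend_zero _ h2.ne', tsum_extend_zero hf]

@[simp]
theorem extendZero_apply (hf : Injective f) (x : L2 α) (a : α) : extendZero hf x (f a) = x a :=
  hf.extend_apply _ _ a

theorem extendZero_apply_of_notMem_range (hf : Injective f) (x : L2 α) {b : β}
    (hb : b ∉ Set.range f) : extendZero hf x b = 0 :=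
  extend_apply' _ _ b hb

theorem memℓp_comp (hf : Injective f) (y : L2 β) : Memℓp (y ∘ f) 2 := by
  have h2 : (0:ℝ) < (2:ℝ≥0∞).toReal := by norm_num
  rw [memℓp_gen_iff h2]
  exact ((memℓp_gen_iff h2).1 (lp.memℓp y)).comp_injective hf

def comap (hf : Injective f) : L2 β →ₗ[ℂ] L2 α where
  toFun y := ⟨y ∘ f, memℓp_comp hf y⟩
  map_add' _ _ := rfl
  map_smul' _ _ := rfl

@[simp]
theorem comap_apply (hf : Injective f) (y : L2 β) (a : α) : comap hf y a = y (f a) := rfl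

theorem inner_extendZero_left (hf : Injective f) (x : L2 α) (y : L2 β) :
    ⟪extendZero hf x, y⟫ = ⟪x, comap hf y⟫ := by
  rw [lp.inner_eq_tsum, lp.inner_eq_tsum, ← tsum_extend_zero hf]
  congr 1
  funext b
  by_cases hb : b ∈ Set.range f
  · obtain ⟨a, rfl⟩ := hb
    simp [hf.extend_apply]
  · rw [extendZero_apply_of_notMem_range hf x hb, extend_apply' _ _ b hb, inner_zero_left]
    rfl

end L2

open Classical in
theorem delta_apply {G : Type} (a g : G) : delta a g = if g = a then 1 else 0 := by
  simp [delta, lp.single_apply, Pi.single_apply]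

section InnerProductSpace

variable {𝕜 E F : Type*} [RCLike 𝕜] [NormedAddCommGroup E] [InnerProductSpace 𝕜 E]
  [CompleteSpace E] [NormedAddCommGroup F] [InnerProductSpace 𝕜 F] [CompleteSpace F]

theorem Submodule.starProjection_topologicalClosure_map (V : E →ₗᵢ[𝕜] F) (W : F → E)
    (hVW : ∀ x y, inner 𝕜 (V x) y = inner 𝕜 x (W y)) {R : Submodule 𝕜 E} {S : Submodule 𝕜 F}
    (hV : ∀ x ∈ R, V x ∈ S) (hW : ∀ y ∈ S, W y ∈ R) (x : E) :
    S.topologicalClosure.starProjection (V x) = V (R.topologicalClosure.starProjection x) := by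
  refine eq_starProjection_of_mem_of_inner_eq_zero ?_ fun w hw => ?_
  · have hle : R.topologicalClosure ≤ S.topologicalClosure.comap V.toLinearMap :=
      R.topologicalClosure_minimal (fun x hx => S.le_topologicalClosure (hV x hx))
        (S.isClosed_topologicalClosure.preimage V.continuous)
    exact hle (starProjection_apply_mem _ x)
  · have hperp : V (x - R.topologicalClosure.starProjection x) ∈ Sᗮ := fun y hy => by
      rw [inner_eq_zero_symm, hVW]
      exact inner_eq_zero_symm.1 <|
        sub_starProjection_mem_orthogonal x _ (R.le_topologicalClosure (hW y hy))
    rw [← map_sub]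
    exact inner_eq_zero_symm.1 ((S.orthogonal_closure ▸ hperp) w hw)

end InnerProductSpace

namespace LinearIsometry

variable {𝕜 E F ι : Type*} [RCLike 𝕜] [NormedAddCommGroup E] [InnerProductSpace 𝕜 E]
  [NormedAddCommGroup F] [InnerProductSpace 𝕜 F] [Fintype ι]

def piL2Map (V : E →ₗᵢ[𝕜] F) : PiLp 2 (fun _ : ι => E) →ₗᵢ[𝕜] PiLp 2 (fun _ : ι => F) where
  toFun x := WithLp.toLp 2 fun i => V (x i)
  map_add' x y := by ext; simp
  map_smul' c x := by ext; simp
  norm_map' x := by simp [PiLp.norm_eq_of_L2]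

@[simp]
theorem piL2Map_apply (V : E →ₗᵢ[𝕜] F) (x : PiLp 2 (fun _ : ι => E)) (i : ι) :
    piL2Map V x i = V (x i) := rfl

end LinearIsometry

section Group

variable {H G : Type} [Group H] [Group G] {K : Subfield ℂ} {φ : H →* G} {n m : ℕ}

theorem Rop_apply (h : G) (x : L2 G) (g : G) : Rop h x g = x (g * h⁻¹) := rfl

theorem rightMulAlg_apply (p : MonoidAlgebra K G) (x : L2 G) :
    rightMulAlg p x = p.coeff.sum fun g c => (c : ℂ) • Rop g x := by
  simp [rightMulAlg, Finsupp.sum]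

theorem rightMulAlg_mapDomain_apply (p : MonoidAlgebra K H) (y : L2 G) :
    rightMulAlg (MonoidAlgebra.mapDomain φ p) y =
      p.coeff.sum fun h c => (c : ℂ) • Rop (φ h) y := by
  rw [rightMulAlg_apply, MonoidAlgebra.coeff_mapDomain, Finsupp.sum_mapDomain_index]
  · simp
  · simp [add_smul]

theorem rightMulMat_apply (M : Matrix (Fin n) (Fin m) (MonoidAlgebra K G))
    (v : PiLp 2 (fun _ : Fin n => L2 G)) (j : Fin m) :
    rightMulMat M v j = ∑ i, rightMulAlg (M i j) (v i) := by
  simp [rightMulMat]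

namespace L2

theorem extendZero_Rop (hφ : Injective φ) (h : H) (x : L2 H) :
    extendZero hφ (Rop h x) = Rop (φ h) (extendZero hφ x) := by
  ext g
  rw [Rop_apply]
  by_cases hg : g ∈ Set.range φ
  · obtain ⟨a, rfl⟩ := hg
    rw [← map_inv, ← map_mul, extendZero_apply, extendZero_apply, Rop_apply]
  · have hg' : g * (φ h)⁻¹ ∉ Set.range φ := fun ⟨a, ha⟩ =>
      hg ⟨a * h, by rw [map_mul, ha, inv_mul_cancel_right]⟩
    rw [extendZero_apply_of_notMem_range hφ _ hg, extendZero_apply_of_notMem_range hφ _ hg']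

theorem comap_Rop (hφ : Injective φ) (h : H) (y : L2 G) :
    comap hφ (Rop (φ h) y) = Rop h (comap hφ y) := by
  ext a
  simp [Rop_apply]

theorem extendZero_rightMulAlg (hφ : Injective φ) (p : MonoidAlgebra K H) (x : L2 H) :
    extendZero hφ (rightMulAlg p x) =
      rightMulAlg (MonoidAlgebra.mapDomain φ p) (extendZero hφ x) := by
  rw [rightMulAlg_mapDomain_apply, rightMulAlg_apply, map_finsuppSum]
  simp only [map_smul, extendZero_Rop hφ]

theorem comap_rightMulAlg (hφ : Injective φ) (p : MonoidAlgebra K H) (y : L2 G) :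
    comap hφ (rightMulAlg (MonoidAlgebra.mapDomain φ p) y) = rightMulAlg p (comap hφ y) := by
  rw [rightMulAlg_mapDomain_apply, rightMulAlg_apply, map_finsuppSum]
  simp only [map_smul, comap_Rop hφ]

end L2

theorem L2.extendZero_delta_one (hφ : Injective φ) : L2.extendZero hφ (delta 1) = delta 1 := by
  ext g
  by_cases hg : g ∈ Set.range φ
  · obtain ⟨a, rfl⟩ := hg
    rw [L2.extendZero_apply, delta_apply, delta_apply, ← map_one φ, hφ.eq_iff]
  · have hg1 : g ≠ 1 := fun h => hg ⟨1, by rw [h, map_one]⟩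
    rw [L2.extendZero_apply_of_notMem_range hφ _ hg, delta_apply, if_neg hg1]

theorem piL2Map_extendZero_deltaVec (hφ : Injective φ) (j : Fin m) :
    (L2.extendZero hφ).piL2Map (deltaVec j) = deltaVec j := by
  ext i : 1
  rcases eq_or_ne i j with rfl | hij
  · simp [deltaVec, L2.extendZero_delta_one hφ]
  · simp [deltaVec, hij]

theorem piL2Map_extendZero_rightMulMat (hφ : Injective φ)
    (M : Matrix (Fin n) (Fin m) (MonoidAlgebra K H))
    (x : PiLp 2 (fun _ : Fin n => L2 H)) :
    (L2.extendZero hφ).piL2Map (rightMulMat M x) =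
      rightMulMat (M.map (MonoidAlgebra.mapDomain φ)) ((L2.extendZero hφ).piL2Map x) := by
  ext j : 1
  simp [rightMulMat_apply, L2.extendZero_rightMulAlg hφ]

theorem L2.comap_rightMulMat (hφ : Injective φ)
    (M : Matrix (Fin n) (Fin m) (MonoidAlgebra K H))
    (y : PiLp 2 (fun _ : Fin n => L2 G)) :
    (WithLp.toLp 2 fun j => L2.comap hφ (rightMulMat (M.map (MonoidAlgebra.mapDomain φ)) y j)) =
      rightMulMat M (WithLp.toLp 2 fun i => L2.comap hφ (y i)) := by
  ext j : 1
  simp [rightMulMat_apply, L2.comap_rightMulAlg hφ]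

theorem vnRank_map_mapDomain (hφ : Injective φ)
    (M : Matrix (Fin n) (Fin m) (MonoidAlgebra K H)) :
    vnRank (M.map (MonoidAlgebra.mapDomain φ)) = vnRank M := by
  refine Finset.sum_congr rfl fun j _ => ?_
  simp only [Submodule.coe_orthogonalProjectionOnto_apply]
  rw [← piL2Map_extendZero_deltaVec hφ j, Submodule.starProjection_topologicalClosure_map _
    (fun y => WithLp.toLp 2 fun i => L2.comap hφ (y i)), LinearIsometry.inner_map_map]
  · intro x y
    simp [PiLp.inner_apply, L2.inner_extendZero_left]
  · rintro _ ⟨x, rfl⟩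
    exact ⟨_, (piL2Map_extendZero_rightMulMat hφ M x).symm⟩
  · rintro _ ⟨y, rfl⟩
    exact ⟨_, (L2.comap_rightMulMat hφ M y).symm⟩

end Group

section Lcm

variable {H G : Type} [Group H] [Group G]

theorem finiteSubgroupOrders_subset_of_injective {φ : H →* G} (hφ : Injective φ) :
    finiteSubgroupOrders H ⊆ finiteSubgroupOrders G := by
  rintro _ ⟨L, hL, rfl⟩
  exact ⟨L.map φ, by simpa using hL.image φ, (Subgroup.card_map_of_injective hφ).symm⟩

theorem lcmOrders_dvd_of_injective {φ : H →* G} (hφ : Injective φ)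
    (hG : (finiteSubgroupOrders G).Finite) : lcmOrders H ∣ lcmOrders G := by
  have hH := hG.subset (finiteSubgroupOrders_subset_of_injective hφ)
  rw [lcmOrders, dif_pos hH, lcmOrders, dif_pos hG]
  exact Finset.lcm_dvd fun k hk => Finset.dvd_lcm <| hG.mem_toFinset.2 <|
    finiteSubgroupOrders_subset_of_injective hφ (hH.mem_toFinset.1 hk)

theorem lcmOrders_ne_zero (hG : (finiteSubgroupOrders G).Finite) : lcmOrders G ≠ 0 := by
  rw [lcmOrders, dif_pos hG, Ne, Finset.lcm_eq_zero_iff]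
  rintro ⟨_, hk, hk0⟩
  obtain ⟨L, hL, rfl⟩ := hG.mem_toFinset.1 hk
  have : Finite L := hL.to_subtype
  exact Nat.card_pos.ne' hk0

end Lcm

theorem Subgroup.exists_finset_subset_of_directed {G I : Type} [Group G] {H : I → Subgroup G}
    (hdir : Directed (· ≤ ·) H) (hcover : ∀ g : G, ∃ i, g ∈ H i) (s : Finset G) :
    ∃ k, ↑s ⊆ (H k : Set G) := by
  classical
  have : Nonempty I := ⟨(hcover 1).choose⟩
  choose idx hidx using hcover
  obtain ⟨k, hk⟩ := hdir.finset_le (s.image idx)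
  exact ⟨k, fun g hg => hk _ (Finset.mem_image_of_mem idx hg) (hidx g)⟩

theorem Matrix.exists_map_mapDomain_subtype_eq {G : Type} [Group G] {K : Subfield ℂ} {n m : ℕ}
    (M : Matrix (Fin n) (Fin m) (MonoidAlgebra K G)) (L : Subgroup G)
    (hM : ∀ i j, ↑(M i j).coeff.support ⊆ (L : Set G)) :
    ∃ M' : Matrix (Fin n) (Fin m) (MonoidAlgebra K L),
      M'.map (MonoidAlgebra.mapDomain L.subtype) = M :=
  ⟨M.map (MonoidAlgebra.comapDomain L.subtype L.subtype_injective), Matrix.ext fun i j =>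
    MonoidAlgebra.mapDomain_comapDomain (by simpa using hM i j) L.subtype_injective⟩

theorem strong_atiyah_of_directed_union_general
    (K : Subfield ℂ)
    (G : Type) [Group G]
    (hlcm : (finiteSubgroupOrders G).Finite)
    (I : Type) (H : I → Subgroup G)
    (hdir : ∀ i j : I, ∃ k : I, H i ≤ H k ∧ H j ≤ H k)
    (hcover : ∀ g : G, ∃ i : I, g ∈ H i)
    (hH : ∀ i : I, SatisfiesStrongAtiyah K ↥(H i)) :
    SatisfiesStrongAtiyah K G := by
  classical
  refine ⟨hlcm, fun n m M => ?_⟩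
  obtain ⟨k, hk⟩ := Subgroup.exists_finset_subset_of_directed hdir hcover
    (Finset.univ.biUnion fun ij : Fin n × Fin m => (M ij.1 ij.2).coeff.support)
  obtain ⟨M', rfl⟩ := M.exists_map_mapDomain_subtype_eq (H k) fun i j =>
    (Finset.coe_subset.2 (Finset.subset_biUnion_of_mem _ (Finset.mem_univ (i, j)))).trans hk
  obtain ⟨z, hz⟩ := (hH k).2 n m M'
  obtain ⟨d, hd⟩ := lcmOrders_dvd_of_injective (H k).subtype_injective hlcm
  have hd0 : (d : ℂ) ≠ 0 := by
    have := lcmOrders_ne_zero hlcm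
    rw [hd] at this
    exact_mod_cast right_ne_zero_of_mul this
  refine ⟨z * d, ?_⟩
  rw [vnRank_map_mapDomain (H k).subtype_injective, hz, hd]
  push_cast
  exact (mul_div_mul_right _ _ hd0).symm

/-- Let `K ⊆ ℂ` be a subfield and `G` a countable group with finite
`lcm(G)` which is the directed union of a family of subgroups each satisfying the strong
Atiyah conjecture over `K`. Then `G` satisfies the strong Atiyah conjecture over `K`. -/
theorem strong_atiyah_of_directed_union
    (K : Subfield ℂ)
    (G : Type) [Group G] [Countable G]
    (hlcm : (finiteSubgroupOrders G).Finite)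
    (I : Type) (H : I → Subgroup G)
    (hdir : ∀ i j : I, ∃ k : I, H i ≤ H k ∧ H j ≤ H k)
    (hcover : ∀ g : G, ∃ i : I, g ∈ H i)
    (hH : ∀ i : I, SatisfiesStrongAtiyah K ↥(H i)) :
    SatisfiesStrongAtiyah K G :=
  strong_atiyah_of_directed_union_general K G hlcm I H hdir hcover hH

end
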